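/- arXiv:2106.15426 — 4 statements merged into one kernel-verified Lean document; each statement's English description precedes it below -/
import Mathlib

section
/- For y ≥ ỹ, the supremum of u(c,l) - (c+wl)y over c ≥ 0 and 0 ≤ l ≤ L equals A₂ y^{-(1-k)/k}, where A₂ = (k/(δ(1-k))) ((1-δ)/(δw))^{(1-k)(1-δ)/k}. -/
/-!
Write `X = c ^ δ * l ^ (1 - δ)`. Weighted AM–GM with weights `1/k`, `δ(k-1)/k`, `(1-δ)(k-1)/k`
bounds `X ^ (1 - k) / (δ (k - 1)) + c y + w l y` from below by a quantity in which `c` and `l`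
cancel, giving the upper bound `A₂ y ^ ((k - 1) / k)`. Equality holds at the interior critical
point `c = δ w l / (1 - δ)`, `l = l₀(y)`, and `y ≥ ỹ` is exactly the condition `l₀(y) ≤ L`.
-/

open Real

theorem Real.rpow_mul_rpow_mul_rpow_le_add_add {p q r a b c : ℝ} (hp : 0 < p) (hq : 0 < q)
    (hr : 0 < r) (hpqr : p + q + r = 1) (ha : 0 ≤ a) (hb : 0 ≤ b) (hc : 0 ≤ c) :
    (a / p) ^ p * (b / q) ^ q * (c / r) ^ r ≤ a + b + c := by
  have h := geom_mean_le_arith_mean3_weighted hp.le hq.le hr.le (div_nonneg ha hp.le)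
    (div_nonneg hb hq.le) (div_nonneg hc hr.le) hpqr
  rwa [mul_div_cancel₀ a hp.ne', mul_div_cancel₀ b hq.ne', mul_div_cancel₀ c hr.ne'] at h

theorem Real.eq_of_log_eq {x y : ℝ} (hx : 0 < x) (hy : 0 < y) (h : log x = log y) : x = y :=
  log_injOn_pos hx hy h

namespace CobbDouglas

variable {δ k w y : ℝ}

/-- The labour supply solving the first-order conditions of the unconstrained problem. -/
noncomputable def optLabour (δ k w y : ℝ) : ℝ :=
  y ^ (-1 / k) * ((1 - δ) / (δ * w)) ^ ((1 - δ * (1 - k)) / k)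

/-- Consumption at the critical point: the first-order conditions force `c / l = δ w / (1 - δ)`. -/
noncomputable def optConsumption (δ k w y : ℝ) : ℝ :=
  δ * w / (1 - δ) * optLabour δ k w y

variable (hδ0 : 0 < δ) (hδ1 : δ < 1) (hw : 0 < w) (hy : 0 < y)
include hδ0 hδ1 hw hy

theorem optLabour_pos : 0 < optLabour δ k w y := by
  have : 0 < 1 - δ := by linarith
  unfold optLabour; positivity

theorem optConsumption_pos : 0 < optConsumption δ k w y := by
  have : 0 < 1 - δ := by linarith
  have := optLabour_pos (k := k) hδ0 hδ1 hw hy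
  unfold optConsumption; positivity

theorem optLabour_rpow_neg (hk : k ≠ 0) :
    optLabour δ k w y ^ (-k) = y / ((1 - δ) / (δ * w)) ^ (1 - δ * (1 - k)) := by
  have : 0 < 1 - δ := by linarith
  have := optLabour_pos (k := k) hδ0 hδ1 hw hy
  apply eq_of_log_eq (by positivity) (by positivity)
  unfold optLabour
  simp (disch := positivity) only [log_rpow, log_mul, log_div]
  field_simp
  ring

theorem optLabour_le {L : ℝ} (hk : 0 < k) (hL : 0 < L)
    (hLy : L ^ (-k) * ((1 - δ) / (δ * w)) ^ (1 - δ * (1 - k)) ≤ y) :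
    optLabour δ k w y ≤ L := by
  have : 0 < 1 - δ := by linarith
  refine (rpow_le_rpow_iff_of_neg hL (optLabour_pos hδ0 hδ1 hw hy) (neg_neg_of_pos hk)).mp ?_
  rw [optLabour_rpow_neg hδ0 hδ1 hw hy hk.ne', le_div_iff₀ (by positivity)]
  exact hLy

theorem utility_optimum (hk : k ≠ 0) :
    (optConsumption δ k w y ^ δ * optLabour δ k w y ^ (1 - δ)) ^ (1 - k)
      = ((1 - δ) / (δ * w)) ^ ((1 - k) * (1 - δ) / k) * y ^ (-(1 - k) / k) := by
  have : 0 < 1 - δ := by linarith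
  have := optLabour_pos (k := k) hδ0 hδ1 hw hy
  have := optConsumption_pos (k := k) hδ0 hδ1 hw hy
  apply eq_of_log_eq (by positivity) (by positivity)
  unfold optConsumption optLabour
  simp (disch := positivity) only [log_rpow, log_mul, log_div]
  field_simp
  ring

theorem cost_optimum (hk : k ≠ 0) :
    (optConsumption δ k w y + w * optLabour δ k w y) * y
      = ((1 - δ) / (δ * w)) ^ ((1 - k) * (1 - δ) / k) * y ^ (-(1 - k) / k) / δ := by
  have : 0 < 1 - δ := by linarith
  have := optLabour_pos (k := k) hδ0 hδ1 hw hy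
  have hsum : optConsumption δ k w y + w * optLabour δ k w y = w / (1 - δ) * optLabour δ k w y := by
    unfold optConsumption; field_simp; ring
  rw [hsum]
  apply eq_of_log_eq (by positivity) (by positivity)
  unfold optLabour
  simp (disch := positivity) only [log_rpow, log_mul, log_div]
  field_simp
  ring

theorem value_optimum (hk : 1 < k) :
    (optConsumption δ k w y ^ δ * optLabour δ k w y ^ (1 - δ)) ^ (1 - k) / (δ * (1 - k))
        - (optConsumption δ k w y + w * optLabour δ k w y) * y
      = k / (δ * (1 - k)) * ((1 - δ) / (δ * w)) ^ ((1 - k) * (1 - δ) / k)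
        * y ^ (-(1 - k) / k) := by
  rw [utility_optimum hδ0 hδ1 hw hy (by linarith), cost_optimum hδ0 hδ1 hw hy (by linarith),
    mul_assoc]
  generalize ((1 - δ) / (δ * w)) ^ ((1 - k) * (1 - δ) / k) * y ^ (-(1 - k) / k) = P
  have : 1 - k ≠ 0 := by linarith
  field_simp
  ring

theorem value_le (hk : 1 < k) {c l : ℝ} (hc : 0 < c) (hl : 0 < l) :
    (c ^ δ * l ^ (1 - δ)) ^ (1 - k) / (δ * (1 - k)) - (c + w * l) * y
      ≤ k / (δ * (1 - k)) * ((1 - δ) / (δ * w)) ^ ((1 - k) * (1 - δ) / k)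
        * y ^ (-(1 - k) / k) := by
  have : 0 < 1 - δ := by linarith
  have : 0 < k - 1 := by linarith
  have hamgm := rpow_mul_rpow_mul_rpow_le_add_add (p := 1 / k) (q := δ * (k - 1) / k)
    (r := (1 - δ) * (k - 1) / k) (by positivity) (by positivity) (by positivity)
    (by field_simp; ring) (a := (c ^ δ * l ^ (1 - δ)) ^ (1 - k) / (δ * (k - 1)))
    (b := c * y) (c := w * l * y) (by positivity) (by positivity) (by positivity)
  have hgeom : ((c ^ δ * l ^ (1 - δ)) ^ (1 - k) / (δ * (k - 1)) / (1 / k)) ^ (1 / k)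
      * (c * y / (δ * (k - 1) / k)) ^ (δ * (k - 1) / k)
      * (w * l * y / ((1 - δ) * (k - 1) / k)) ^ ((1 - δ) * (k - 1) / k)
      = k / (δ * (k - 1)) * ((1 - δ) / (δ * w)) ^ ((1 - k) * (1 - δ) / k)
        * y ^ (-(1 - k) / k) := by
    apply eq_of_log_eq (by positivity) (by positivity)
    simp (disch := positivity) only [log_rpow, log_mul, log_div, log_one]
    field_simp
    ring
  rw [hgeom] at hamgm
  have hneg : ∀ x : ℝ, x / (δ * (1 - k)) = -(x / (δ * (k - 1))) := fun x => by
    rw [← div_neg]; ring_nf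
  rw [hneg, mul_assoc, hneg, ← mul_assoc]
  linarith

end CobbDouglas

open CobbDouglas in
theorem stmt_3 (δ k w L y : ℝ) (hδ0 : 0 < δ) (hδ1 : δ < 1) (hk : 1 < k)
    (hw : 0 < w) (hL : 0 < L) (hy0 : 0 < y)
    (hy : L ^ (-k) * ((1 - δ) / (δ * w)) ^ (1 - δ * (1 - k)) ≤ y) :
    IsLUB {v : ℝ | ∃ c l : ℝ, 0 < c ∧ 0 < l ∧ l ≤ L ∧
        v = (c ^ δ * l ^ (1 - δ)) ^ (1 - k) / (δ * (1 - k)) - (c + w * l) * y}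
      (k / (δ * (1 - k)) * ((1 - δ) / (δ * w)) ^ ((1 - k) * (1 - δ) / k)
        * y ^ (-(1 - k) / k)) := by
  refine IsGreatest.isLUB ⟨?_, ?_⟩
  · exact ⟨optConsumption δ k w y, optLabour δ k w y, optConsumption_pos hδ0 hδ1 hw hy0,
      optLabour_pos hδ0 hδ1 hw hy0, optLabour_le hδ0 hδ1 hw hy0 (by linarith) hL hy,
      (value_optimum hδ0 hδ1 hw hy0 hk).symm⟩
  · rintro v ⟨c, l, hc, hl, -, rfl⟩
    exact value_le hδ0 hδ1 hw hy0 hk hc hl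
end

section
/- For 0 < y < ỹ, the supremum of u(c,l) - (c+wl)y over c ≥ 0 and 0 ≤ l ≤ L equals A₁ y^{δ(1-k)/(δ(1-k)-1)} - wLy, where A₁ = ((1-δ+δk)/(δ(1-k))) L^{-(1-k)(1-δ)/(δ(1-k)-1)}, attained at l = L and c = L^{-(1-k)(1-δ)/(δ(1-k)-1)} y^{1/(δ(1-k)-1)}. -/
/-!
Write `α = δ(1-k)`, `β = (1-k)(1-δ)` and `γ = -β/(α-1)`, so that `u(c,l) = c^α l^β / α` with
`α, β, γ < 0`. For fixed `l` the objective is concave in `c` and is maximised where the marginal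
utility `c^(α-1) l^β` equals `y`, i.e. at `c₀(l) = l^γ y^(1/(α-1))`, with value
`(1-α)/α · l^γ y^(α/(α-1)) - wly`. This reduced value is concave in `l`, and `y < ỹ` says exactly
that its derivative at `l = L` is positive, so it is maximised at `l = L`. Both concavity steps are
the tangent-line inequality for `x ↦ x^p` with `p < 0`.
-/

open Real

lemma rpow_add_mul_rpow_sub_one_mul_sub_le {p s t : ℝ} (hp : p < 0) (hs : 0 < s) (ht : 0 < t) :
    s ^ p + p * s ^ (p - 1) * (t - s) ≤ t ^ p := by
  have h1p : 0 < 1 - p := by linarith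
  have hsum : 1 / (1 - p) + -p / (1 - p) = 1 := by field_simp; ring
  -- weighted AM-GM of `t ^ p` and `s ^ (p - 1) * t` with weights `1 : -p`
  have amgm := geom_mean_le_arith_mean2_weighted (by positivity) (div_nonneg (neg_nonneg.2 hp.le)
    h1p.le) (rpow_pos_of_pos ht p).le (by positivity : 0 ≤ s ^ (p - 1) * t) hsum
  have hgm : (t ^ p) ^ (1 / (1 - p)) * (s ^ (p - 1) * t) ^ (-p / (1 - p)) = s ^ p := by
    rw [mul_rpow (by positivity) ht.le, ← rpow_mul ht.le, ← rpow_mul hs.le,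
      mul_left_comm, ← rpow_add ht]
    have ht0 : p * (1 / (1 - p)) + -p / (1 - p) = 0 := by field_simp; ring
    have hsp : (p - 1) * (-p / (1 - p)) = p := by field_simp; ring
    rw [ht0, hsp, rpow_zero, mul_one]
  rw [hgm, div_mul_eq_mul_div, div_mul_eq_mul_div, ← add_div, le_div_iff₀ h1p] at amgm
  have hss : s ^ (p - 1) * s = s ^ p := by rw [rpow_sub_one hs.ne', div_mul_cancel₀ _ hs.ne']
  nlinarith

lemma mul_rpow_sub_mul_le_of_slope {p A m s t : ℝ} (hp : p < 0) (hA : A ≤ 0) (hs : 0 < s)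
    (ht : 0 < t) (hslope : 0 ≤ (A * p * s ^ (p - 1) - m) * (s - t)) :
    A * t ^ p - m * t ≤ A * s ^ p - m * s := by
  have := mul_le_mul_of_nonpos_left (rpow_add_mul_rpow_sub_one_mul_sub_le hp hs ht) hA
  linear_combination this + hslope

lemma rpow_mul_div_sub_mul_le_of_foc {α b y c c₀ : ℝ} (hα : α < 0) (hb : 0 ≤ b) (hc : 0 < c)
    (hc₀ : 0 < c₀) (hfoc : c₀ ^ (α - 1) * b = y) :
    c ^ α * b / α - c * y ≤ c₀ ^ α * b / α - c₀ * y := by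
  have hslope : b / α * α * c₀ ^ (α - 1) - y = 0 := by
    rw [div_mul_cancel₀ _ hα.ne, ← hfoc, mul_comm, sub_self]
  have := mul_rpow_sub_mul_le_of_slope hα (div_nonpos_of_nonneg_of_nonpos hb hα.le) hc₀ hc
    (by rw [hslope, zero_mul])
  linear_combination this

lemma rpow_mul_div_sub_mul_eq_of_foc {α b y c₀ : ℝ} (hα : α ≠ 0) (hc₀ : 0 < c₀)
    (hfoc : c₀ ^ (α - 1) * b = y) :
    c₀ ^ α * b / α - c₀ * y = (1 - α) / α * (c₀ * y) := by
  rw [← hfoc, rpow_sub_one hc₀.ne']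
  field_simp

lemma rpow_neg_div_mul_rpow_one_div_rpow_sub_one_mul_rpow {α β l y : ℝ} (hα : α ≠ 1) (hl : 0 < l)
    (hy : 0 < y) :
    (l ^ (-β / (α - 1)) * y ^ (1 / (α - 1))) ^ (α - 1) * l ^ β = y := by
  have hα1 : α - 1 ≠ 0 := sub_ne_zero.2 hα
  rw [mul_rpow (by positivity) (by positivity), ← rpow_mul hl.le, ← rpow_mul hy.le,
    div_mul_cancel₀ _ hα1, one_div_mul_cancel hα1, rpow_one, mul_right_comm, ← rpow_add hl,
    neg_add_cancel, rpow_zero, one_mul]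

lemma rpow_one_div_sub_one_mul_self {α y : ℝ} (hα : α ≠ 1) (hy : 0 < y) :
    y ^ (1 / (α - 1)) * y = y ^ (α / (α - 1)) := by
  have hα1 : α - 1 ≠ 0 := sub_ne_zero.2 hα
  rw [← rpow_add_one hy.ne']
  congr 1
  field_simp
  ring

lemma mul_rpow_rpow_rpow {c l a b r : ℝ} (hc : 0 ≤ c) (hl : 0 ≤ l) :
    (c ^ a * l ^ b) ^ r = c ^ (a * r) * l ^ (r * b) := by
  rw [mul_rpow (by positivity) (by positivity), ← rpow_mul hc, ← rpow_mul hl, mul_comm b]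

lemma mul_le_marginal_value_of_lt {δ k w L y : ℝ} (hδ0 : 0 < δ) (hδ1 : δ < 1) (hk : 1 < k)
    (hw : 0 < w) (hL : 0 < L) (hy0 : 0 < y)
    (hy : y < L ^ (-k) * ((1 - δ) / (δ * w)) ^ (1 - δ * (1 - k))) :
    w * y ≤ (1 - δ + δ * k) / (δ * (1 - k)) * y ^ (δ * (1 - k) / (δ * (1 - k) - 1))
      * (-((1 - k) * (1 - δ)) / (δ * (1 - k) - 1))
      * L ^ (-((1 - k) * (1 - δ)) / (δ * (1 - k) - 1) - 1) := by
  set α := δ * (1 - k) with hα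
  set γ := -((1 - k) * (1 - δ)) / (α - 1) with hγ
  have hα0 : α < 0 := mul_neg_of_pos_of_neg hδ0 (by linarith)
  have hα1 : α - 1 ≠ 0 := by linarith
  have hα1' : δ * (1 - k) - 1 ≠ 0 := hα1
  have hδ' : 1 - δ ≠ 0 := by linarith
  have hk1 : 1 - k ≠ 0 := by linarith
  have hD : 0 < (1 - δ) / (δ * w) := div_pos (by linarith) (by positivity)
  -- `ỹ` is the value of `y` at which the derivative of the reduced value at `l = L` vanishes.
  have hthreshold : L ^ (-k / (α - 1)) * (δ * w / (1 - δ)) < y ^ (1 / (α - 1)) := by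
    have := rpow_lt_rpow_of_neg hy0 hy (one_div_neg.2 (by linarith : α - 1 < 0))
    rwa [mul_rpow (by positivity) (by positivity), ← rpow_mul hL.le, ← rpow_mul hD.le,
      show (1 - α) * (1 / (α - 1)) = -1 by field_simp; ring, rpow_neg_one, inv_div,
      mul_one_div] at this
  have hLL : L ^ (-k / (α - 1)) * L ^ (γ - 1) = 1 := by
    rw [← rpow_add hL, show -k / (α - 1) + (γ - 1) = 0 by rw [hγ, hα]; field_simp; ring,
      rpow_zero]
  have hcoef : (1 - δ + δ * k) / α * γ = (1 - δ) / δ := by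
    rw [hγ, hα]; field_simp; ring
  calc w * y = (1 - δ) / δ * (δ * w / (1 - δ)) * (L ^ (-k / (α - 1)) * L ^ (γ - 1)) * y := by
        rw [hLL]; field_simp
    _ = (1 - δ) / δ * L ^ (γ - 1) * y * (L ^ (-k / (α - 1)) * (δ * w / (1 - δ))) := by ring
    _ ≤ (1 - δ) / δ * L ^ (γ - 1) * y * y ^ (1 / (α - 1)) :=
        mul_le_mul_of_nonneg_left hthreshold.le (by positivity [show 0 < 1 - δ by linarith])
    _ = _ := by
        rw [← rpow_one_div_sub_one_mul_self (by linarith) hy0, ← hcoef]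
        ring

theorem stmt_4 (δ k w L y : ℝ) (hδ0 : 0 < δ) (hδ1 : δ < 1) (hk : 1 < k)
    (hw : 0 < w) (hL : 0 < L) (hy0 : 0 < y)
    (hy : y < L ^ (-k) * ((1 - δ) / (δ * w)) ^ (1 - δ * (1 - k))) :
    IsGreatest {v : ℝ | ∃ c l : ℝ, 0 < c ∧ 0 < l ∧ l ≤ L ∧
        v = (c ^ δ * l ^ (1 - δ)) ^ (1 - k) / (δ * (1 - k)) - (c + w * l) * y}
      ((1 - δ + δ * k) / (δ * (1 - k)) * L ^ (-((1 - k) * (1 - δ)) / (δ * (1 - k) - 1))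
        * y ^ (δ * (1 - k) / (δ * (1 - k) - 1)) - w * L * y) ∧
    (let c₀ : ℝ := L ^ (-((1 - k) * (1 - δ)) / (δ * (1 - k) - 1)) * y ^ (1 / (δ * (1 - k) - 1));
      (c₀ ^ δ * L ^ (1 - δ)) ^ (1 - k) / (δ * (1 - k)) - (c₀ + w * L) * y
        = (1 - δ + δ * k) / (δ * (1 - k)) * L ^ (-((1 - k) * (1 - δ)) / (δ * (1 - k) - 1))
            * y ^ (δ * (1 - k) / (δ * (1 - k) - 1)) - w * L * y) := by
  set α := δ * (1 - k)
  set γ := -((1 - k) * (1 - δ)) / (α - 1)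
  have hα0 : α < 0 := mul_neg_of_pos_of_neg hδ0 (by linarith)
  set c₀ : ℝ → ℝ := fun l => l ^ γ * y ^ (1 / (α - 1)) with hc₀
  have hfoc : ∀ l, 0 < l → c₀ l ^ (α - 1) * l ^ ((1 - k) * (1 - δ)) = y := fun l hl =>
    rpow_neg_div_mul_rpow_one_div_rpow_sub_one_mul_rpow (by linarith) hl hy0
  have hvalue : ∀ l, 0 < l → (c₀ l ^ δ * l ^ (1 - δ)) ^ (1 - k) / α - (c₀ l + w * l) * y
      = (1 - δ + δ * k) / α * l ^ γ * y ^ (α / (α - 1)) - w * l * y := fun l hl => by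
    have hc : 0 < c₀ l := by positivity
    rw [mul_rpow_rpow_rpow hc.le hl.le, add_mul, ← sub_sub,
      rpow_mul_div_sub_mul_eq_of_foc hα0.ne hc (hfoc l hl), hc₀, mul_assoc (l ^ γ),
      rpow_one_div_sub_one_mul_self (by linarith) hy0]
    ring
  refine ⟨⟨⟨c₀ L, L, by positivity, hL, le_rfl, (hvalue L hL).symm⟩, ?_⟩, hvalue L hL⟩
  rintro v ⟨c, l, hc, hl, hlL, rfl⟩
  have hγ0 : γ < 0 := div_neg_of_pos_of_neg (by nlinarith) (by linarith)
  have hA : (1 - δ + δ * k) / α * y ^ (α / (α - 1)) ≤ 0 :=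
    mul_nonpos_of_nonpos_of_nonneg (div_nonpos_of_nonneg_of_nonpos (by nlinarith) hα0.le)
      (by positivity)
  have hslope := mul_le_marginal_value_of_lt hδ0 hδ1 hk hw hL hy0 hy
  calc _ = c ^ α * l ^ ((1 - k) * (1 - δ)) / α - c * y - w * l * y := by
        rw [mul_rpow_rpow_rpow hc.le hl.le]; ring
    _ ≤ c₀ l ^ α * l ^ ((1 - k) * (1 - δ)) / α - c₀ l * y - w * l * y := by
        gcongr ?_ - _
        exact rpow_mul_div_sub_mul_le_of_foc hα0 (by positivity) hc (by positivity) (hfoc l hl)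
    _ = (1 - δ + δ * k) / α * l ^ γ * y ^ (α / (α - 1)) - w * l * y := by
        rw [← hvalue l hl, mul_rpow_rpow_rpow (by positivity) hl.le]; ring
    _ ≤ _ := by
        have := mul_rpow_sub_mul_le_of_slope hγ0 hA hL hl
          (mul_nonneg (sub_nonneg.2 hslope) (sub_nonneg.2 hlL))
        linear_combination this
end

section
/- On the interval 0 < z < αỹ, the difference of second derivatives ũ''(z) - (1/α²) ũ''(z/α) is strictly negative, where ũ(z) = A₁ z^{δ(1-k)/(δ(1-k)-1)} - wLz on (0, ỹ). -/
/-! With `p = δ(1-k)/(δ(1-k)-1) ∈ (0, 1)`, the second derivative is `ũ''(z) = C z^(p-2)` with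
`C = A₁ p (p-1) > 0`, and the rescaled term is `(1/α²) ũ''(z/α) = α^(-p) ũ''(z)`, where
`α^(-p) > 1` because `0 < α < 1`. -/

open Real Filter Topology Set

lemma deriv_deriv_const_mul_rpow_sub_mul (c p b : ℝ) {x : ℝ} (hx : x ≠ 0) :
    deriv (deriv fun z : ℝ => c * z ^ p - b * z) x = c * (p * (p - 1)) * x ^ (p - 2) := by
  have hderiv : deriv (fun z : ℝ => c * z ^ p - b * z) =ᶠ[𝓝 x]
      fun z => c * (p * z ^ (p - 1)) - b := by
    filter_upwards [eventually_ne_nhds hx] with z hz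
    have h : HasDerivAt (fun z : ℝ => c * z ^ p - b * z) (c * (p * z ^ (p - 1)) - b * 1) z :=
      ((hasDerivAt_rpow_const (Or.inl hz)).const_mul c).sub ((hasDerivAt_id z).const_mul b)
    rw [h.deriv, mul_one]
  rw [hderiv.deriv_eq, deriv_sub_const, deriv_const_mul_field, deriv_const_mul_field,
    Real.deriv_rpow_const, sub_sub, one_add_one_eq_two]
  ring

lemma one_div_sq_mul_div_rpow_sub_two (q : ℝ) {z α : ℝ} (hz : 0 ≤ z) (hα : 0 < α) :
    1 / α ^ 2 * (z / α) ^ (q - 2) = α ^ (-q) * z ^ (q - 2) := by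
  have hα2 : α ^ q = α ^ 2 * α ^ (q - 2) := by
    rw [← rpow_natCast, ← rpow_add hα]; norm_num
  rw [div_rpow hz hα.le, rpow_neg hα.le, hα2]
  have := (rpow_pos_of_pos hα (q - 2)).ne'
  field_simp

lemma mul_rpow_sub_two_lt_one_div_sq_mul_div {C p z α : ℝ} (hC : 0 < C) (hp : 0 < p)
    (hz : 0 < z) (hα0 : 0 < α) (hα1 : α < 1) :
    C * z ^ (p - 2) < 1 / α ^ 2 * (C * (z / α) ^ (p - 2)) := by
  have hαp : 1 < α ^ (-p) := one_lt_rpow_of_pos_of_lt_one_of_neg hα0 hα1 (neg_neg_of_pos hp)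
  rw [mul_left_comm (1 / α ^ 2), one_div_sq_mul_div_rpow_sub_two p hz.le hα0, mul_left_comm C]
  exact lt_mul_of_one_lt_left (mul_pos hC (rpow_pos_of_pos hz _)) hαp

lemma div_sub_one_mem_Ioo_of_neg {s : ℝ} (hs : s < 0) : s / (s - 1) ∈ Ioo 0 1 :=
  ⟨div_pos_of_neg_of_neg hs (by linarith), (div_lt_one_of_neg (by linarith)).2 (by linarith)⟩

theorem stmt_8_general (δ k w L α : ℝ) (hδ0 : 0 < δ) (hk : 1 < k)
    (hL : 0 < L) (hα0 : 0 < α) (hα1 : α < 1)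
    (A₁ ytil : ℝ)
    (hA₁ : A₁ = (1 - δ + δ * k) / (δ * (1 - k)) * L ^ (-((1 - k) * (1 - δ)) / (δ * (1 - k) - 1)))
    (f : ℝ → ℝ)
    (hf : ∀ z : ℝ, f z = A₁ * z ^ (δ * (1 - k) / (δ * (1 - k) - 1)) - w * L * z) :
    ∀ z : ℝ, 0 < z → z < α * ytil →
      deriv (deriv f) z - 1 / α ^ 2 * deriv (deriv f) (z / α) < 0 := by
  intro z hz _
  obtain rfl : f = _ := funext hf
  set p := δ * (1 - k) / (δ * (1 - k) - 1)
  have hs : δ * (1 - k) < 0 := mul_neg_of_pos_of_neg hδ0 (by linarith)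
  obtain ⟨hp0, hp1⟩ : p ∈ Ioo 0 1 := div_sub_one_mem_Ioo_of_neg hs
  have hA₁neg : A₁ < 0 := hA₁ ▸
    mul_neg_of_neg_of_pos (div_neg_of_pos_of_neg (by nlinarith) hs) (rpow_pos_of_pos hL _)
  have hC : 0 < A₁ * (p * (p - 1)) :=
    mul_pos_of_neg_of_neg hA₁neg (mul_neg_of_pos_of_neg hp0 (by linarith))
  rw [deriv_deriv_const_mul_rpow_sub_mul _ _ _ hz.ne',
    deriv_deriv_const_mul_rpow_sub_mul _ _ _ (div_pos hz hα0).ne']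
  linarith [mul_rpow_sub_two_lt_one_div_sq_mul_div hC hp0 hz hα0 hα1]

theorem stmt_8 (δ k w L α : ℝ) (hδ0 : 0 < δ) (hδ1 : δ < 1) (hk : 1 < k)
    (hw : 0 < w) (hL : 0 < L) (hα0 : 0 < α) (hα1 : α < 1)
    (A₁ ytil : ℝ)
    (hA₁ : A₁ = (1 - δ + δ * k) / (δ * (1 - k)) * L ^ (-((1 - k) * (1 - δ)) / (δ * (1 - k) - 1)))
    (hytil : ytil = L ^ (-k) * ((1 - δ) / (δ * w)) ^ (1 - δ * (1 - k)))
    (f : ℝ → ℝ)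
    (hf : ∀ z : ℝ, f z = A₁ * z ^ (δ * (1 - k) / (δ * (1 - k) - 1)) - w * L * z) :
    ∀ z : ℝ, 0 < z → z < α * ytil →
      deriv (deriv f) z - 1 / α ^ 2 * deriv (deriv f) (z / α) < 0 :=
  stmt_8_general δ k w L α hδ0 hk hL hα0 hα1 A₁ ytil hA₁ f hf
end

section
/- On the interval z ≥ ỹ (so z/α > ỹ), the difference ũ''(z) - (1/α²) ũ''(z/α) = ((1-k)/k²) A₂ z^{-1/k - 1}(1 - α^{(1-k)/k}) is strictly negative. -/
open Real

theorem deriv_deriv_const_mul_rpow (A c : ℝ) :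
    deriv (deriv fun y : ℝ => A * y ^ c) = fun x => A * c * (c - 1) * x ^ (c - 2) := by
  funext x
  simp only [deriv_const_mul_field', deriv_rpow_const']
  ring_nf

/-- `f''` is homogeneous of degree `c - 2`, so `f''(z / α) / α ^ 2 = α ^ (-c) f''(z)`. -/
theorem deriv_deriv_const_mul_rpow_sub_scaled (A c : ℝ) {α z : ℝ} (hα : 0 < α) (hz : 0 ≤ z) :
    deriv (deriv fun y : ℝ => A * y ^ c) z
        - 1 / α ^ 2 * deriv (deriv fun y : ℝ => A * y ^ c) (z / α)
      = A * c * (c - 1) * z ^ (c - 2) * (1 - α ^ (-c)) := by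
  have hscale : 1 / α ^ 2 * (z / α) ^ (c - 2) = z ^ (c - 2) * α ^ (-c) := by
    rw [div_rpow hz hα.le, ← rpow_natCast, div_eq_mul_inv (z ^ _), ← rpow_neg hα.le, one_div,
      ← rpow_neg hα.le, mul_left_comm, ← rpow_add hα]
    congr 2
    push_cast
    ring
  rw [deriv_deriv_const_mul_rpow]
  linear_combination (-(A * c * (c - 1))) * hscale

theorem stmt_9 (δ k w L α : ℝ) (hδ0 : 0 < δ) (hδ1 : δ < 1) (hk : 1 < k)
    (hw : 0 < w) (hL : 0 < L) (hα0 : 0 < α) (hα1 : α < 1)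
    (A₂ ytil : ℝ)
    (hA₂ : A₂ = k / (δ * (1 - k)) * ((1 - δ) / (δ * w)) ^ ((1 - k) * (1 - δ) / k))
    (hytil : ytil = L ^ (-k) * ((1 - δ) / (δ * w)) ^ (1 - δ * (1 - k)))
    (g : ℝ → ℝ)
    (hg : ∀ z : ℝ, g z = A₂ * z ^ (-(1 - k) / k)) :
    ∀ z : ℝ, ytil ≤ z →
      (deriv (deriv g) z - 1 / α ^ 2 * deriv (deriv g) (z / α)
          = (1 - k) / k ^ 2 * A₂ * z ^ (-1 / k - 1) * (1 - α ^ ((1 - k) / k))) ∧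
      deriv (deriv g) z - 1 / α ^ 2 * deriv (deriv g) (z / α) < 0 := by
  have hbase : 0 < (1 - δ) / (δ * w) := div_pos (by linarith) (by positivity)
  have hA₂neg : A₂ < 0 := hA₂ ▸ mul_neg_of_neg_of_pos
    (div_neg_of_pos_of_neg (by linarith) (mul_neg_of_pos_of_neg hδ0 (by linarith)))
    (rpow_pos_of_pos hbase _)
  have hytil0 : 0 < ytil := hytil ▸ mul_pos (rpow_pos_of_pos hL _) (rpow_pos_of_pos hbase _)
  intro z hz
  have hz0 : 0 < z := hytil0.trans_le hz
  have hformula : deriv (deriv g) z - 1 / α ^ 2 * deriv (deriv g) (z / α)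
      = (1 - k) / k ^ 2 * A₂ * z ^ (-1 / k - 1) * (1 - α ^ ((1 - k) / k)) := by
    rw [funext hg, deriv_deriv_const_mul_rpow_sub_scaled _ _ hα0 hz0.le,
      show -(1 - k) / k - 2 = -1 / k - 1 by field_simp; ring,
      show -(-(1 - k) / k) = (1 - k) / k by ring]
    field_simp
    ring
  have hexp : (1 - k) / k < 0 := div_neg_of_neg_of_pos (by linarith) (by linarith)
  refine ⟨hformula, hformula ▸ mul_neg_of_pos_of_neg ?_ ?_⟩
  · exact mul_pos (mul_pos_of_neg_of_neg (div_neg_of_neg_of_pos (by linarith) (by positivity))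
      hA₂neg) (rpow_pos_of_pos hz0 _)
  · exact sub_neg.2 (one_lt_rpow_of_pos_of_lt_one_of_neg hα0 hα1 hexp)
end
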